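/- Let 𝒲 be a nonempty closed convex subset of the simplex Δ ⊂ ℝ^n, and suppose the function x ↦ min_{w∈𝒲} ∑ᵢ wᵢ xᵢ is symmetric under permutations of coordinates. Then 𝒲 is symmetric: for every w ∈ 𝒲 and permutation π, the permuted vector w∘π is in 𝒲. -/

import Mathlib

/-!
If `w ∘ π ∉ 𝒲`, separate it from the closed convex set `𝒲` by a linear functional `v ↦ v ⬝ᵥ x`:
`(w ∘ π) ⬝ᵥ x < inf_{v ∈ 𝒲} v ⬝ᵥ x`. Reindexing gives `(w ∘ π) ⬝ᵥ x = w ⬝ᵥ (x ∘ π⁻¹)`, which is at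
least `inf_{v ∈ 𝒲} v ⬝ᵥ (x ∘ π⁻¹)`, and by the symmetry hypothesis this infimum equals
`inf_{v ∈ 𝒲} v ⬝ᵥ x` — a contradiction.
-/

open Set

variable {ι : Type*} [Fintype ι]

lemma bddBelow_image_dotProduct_of_subset_stdSimplex {s : Set (ι → ℝ)}
    (hs : s ⊆ stdSimplex ℝ ι) (x : ι → ℝ) : BddBelow ((· ⬝ᵥ x) '' s) :=
  ((isCompact_stdSimplex ℝ ι).bddBelow_image (by fun_prop)).mono (image_mono hs)

lemma exists_dotProduct_lt_le_of_notMem [DecidableEq ι] {s : Set (ι → ℝ)} (hconv : Convex ℝ s)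
    (hclosed : IsClosed s) {w : ι → ℝ} (hw : w ∉ s) :
    ∃ x : ι → ℝ, ∃ u, w ⬝ᵥ x < u ∧ ∀ v ∈ s, u ≤ v ⬝ᵥ x := by
  obtain ⟨f, u, hwu, hsu⟩ := geometric_hahn_banach_point_closed hconv hclosed hw
  have hf (v : ι → ℝ) : f v = v ⬝ᵥ (dotProductEquiv ℝ ι).symm f.toLinearMap := by
    rw [dotProduct_comm, ← dotProductEquiv_apply_apply, LinearEquiv.apply_symm_apply]
    rfl
  exact ⟨_, u, hf w ▸ hwu, fun v hv => (hf v ▸ hsu v hv).le⟩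

theorem comp_perm_mem_of_sInf_image_dotProduct_comp_perm {s : Set (ι → ℝ)}
    (hconv : Convex ℝ s) (hclosed : IsClosed s) (hbdd : ∀ x, BddBelow ((· ⬝ᵥ x) '' s))
    (hsym : ∀ (π : Equiv.Perm ι) (x : ι → ℝ), sInf ((· ⬝ᵥ x ∘ π) '' s) = sInf ((· ⬝ᵥ x) '' s))
    {w : ι → ℝ} (hw : w ∈ s) (π : Equiv.Perm ι) : w ∘ π ∈ s := by
  classical
  by_contra hwπ
  obtain ⟨x, u, hwπu, hsu⟩ := exists_dotProduct_lt_le_of_notMem hconv hclosed hwπ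
  have hu_le_inf : u ≤ sInf ((· ⬝ᵥ x) '' s) :=
    le_csInf ⟨_, mem_image_of_mem _ hw⟩ (forall_mem_image.mpr hsu)
  have hinf_le : sInf ((· ⬝ᵥ x) '' s) ≤ w ∘ π ⬝ᵥ x := by
    rw [← dotProduct_comp_equiv_symm, ← hsym π.symm x]
    exact csInf_le (hbdd _) (mem_image_of_mem _ hw)
  linarith

theorem stmt_10_general (n : ℕ) (𝒲 : Set (Fin n → ℝ))
    (h𝒲closed : IsClosed 𝒲) (h𝒲convex : Convex ℝ 𝒲)
    (h𝒲Δ : ∀ w ∈ 𝒲, (∀ i, 0 ≤ w i) ∧ ∑ i, w i = 1)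
    (hsym : ∀ (π : Equiv.Perm (Fin n)) (x : Fin n → ℝ),
      sInf ((fun w => ∑ i, w i * x (π i)) '' 𝒲) = sInf ((fun w => ∑ i, w i * x i) '' 𝒲)) :
    ∀ w ∈ 𝒲, ∀ π : Equiv.Perm (Fin n), (fun i => w (π i)) ∈ 𝒲 :=
  fun _ hw π => comp_perm_mem_of_sInf_image_dotProduct_comp_perm h𝒲convex h𝒲closed
    (bddBelow_image_dotProduct_of_subset_stdSimplex h𝒲Δ) hsym hw π

/-- If the min-of-weighted-sums function over a nonempty closed convex
subset of the simplex is symmetric under coordinate permutations, then the weight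
set itself is symmetric. -/
theorem stmt_10 (n : ℕ) (hn : 0 < n) (𝒲 : Set (Fin n → ℝ))
    (h𝒲ne : 𝒲.Nonempty) (h𝒲closed : IsClosed 𝒲) (h𝒲convex : Convex ℝ 𝒲)
    (h𝒲Δ : ∀ w ∈ 𝒲, (∀ i, 0 ≤ w i) ∧ ∑ i, w i = 1)
    (hsym : ∀ (π : Equiv.Perm (Fin n)) (x : Fin n → ℝ),
      sInf ((fun w => ∑ i, w i * x (π i)) '' 𝒲) = sInf ((fun w => ∑ i, w i * x i) '' 𝒲)) :
    ∀ w ∈ 𝒲, ∀ π : Equiv.Perm (Fin n), (fun i => w (π i)) ∈ 𝒲 :=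
  stmt_10_general n 𝒲 h𝒲closed h𝒲convex h𝒲Δ hsym
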